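/- arXiv:2008.03244 — 2 statements merged into one kernel-verified Lean document; each statement's English description precedes it below -/
import Mathlib

section
/- Let ξ = (ξ₁,…,ξ_m) ∈ {0,1}^m be a random vector with mutually independent Bernoulli coordinates, P(ξ_i = 1) = p_i. Let A = (a_{ij}) be an m×m real matrix with a_{ii} = 0 for all i, and set D_max = ‖A‖_∞ + ‖A‖₁. Then for every λ with |λ| ≤ 1/(16 max(‖A‖₁, ‖A‖_∞)): E exp(λ (Σ_{i,j} a_{ij} ξ_i ξ_j − E[Σ_{i,j} a_{ij} ξ_i ξ_j])) ≤ exp(36.5 λ² D_max e^{8|λ|D_max} Σ_{i≠j} |a_{ij}| p_i p_j). -/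
open MeasureTheory ProbabilityTheory Matrix Finset

/-- Maximum absolute row sum `‖A‖_∞` of an `m × m` real matrix. -/
noncomputable def rowSumNorm {m : ℕ} (A : Matrix (Fin m) (Fin m) ℝ) : ℝ :=
  ⨆ i, ∑ j, |A i j|

/-- Maximum absolute column sum `‖A‖₁` of an `m × m` real matrix. -/
noncomputable def colSumNorm {m : ℕ} (A : Matrix (Fin m) (Fin m) ℝ) : ℝ :=
  ⨆ j, ∑ i, |A i j|

/-!
Reveal the coordinates one at a time. Revealing `ξ_k` splits `(ξ_k - p_k) u` off the centred
exponent, where `u = λ ∑_j (a_kj + a_jk) ξ_j + γ_k` is affine in the unrevealed coordinates, and the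
Bernoulli bound `𝔼 exp ((ξ_k - p_k) u) ≤ exp (p_k u²)` for `|u| ≤ 1` removes it. Since the `ξ_j` are
`0`/`1`-valued and `D = ‖A‖_∞ + ‖A‖₁` bounds the row sums of `|A + Aᵀ|`, the bound
`u² ≤ 2λ² D ∑_j |a_kj + a_jk| ξ_j + 2 γ_k²` is affine again, so the exponent keeps the shape
"centred quadratic form plus a centred linear tilt `γ`". Revealing `ξ_k` raises `|γ_j|` by at most
`2|λ| p_k |a_kj + a_jk|`, which keeps `|u| ≤ 1` as long as `|λ| D ≤ 1/8`, and costs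
`10 λ² D p_k ∑_j p_j |a_jk + a_kj|`; summed over `k` this is at most
`20 λ² D ∑_{i ≠ j} |a_ij| p_i p_j`.
-/

open Function

namespace BernoulliQuadratic

section quadForm

variable {ι : Type*} (A : Matrix ι ι ℝ) (p : ι → ℝ)

def quadForm (s : Finset ι) (v : ι → ℝ) : ℝ := ∑ i ∈ s, ∑ j ∈ s, A i j * v i * v j

/-- The exponent that remains once the coordinates outside `s` have been integrated out, leaving
behind the linear tilt `γ`. -/
def tiltedExponent (lam : ℝ) (s : Finset ι) (γ v : ι → ℝ) : ℝ :=
  lam * (quadForm A s v - quadForm A s p) + ∑ j ∈ s, γ j * (v j - p j)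

def influence (s : Finset ι) (j : ι) : ℝ := ∑ k ∈ s, p k * |A k j + A j k|

/-- The tilt picked up by the other coordinates when coordinate `k` is integrated out. -/
def tiltIncrement (lam D : ℝ) (k j : ι) : ℝ :=
  p k * (lam * (A k j + A j k) + 2 * lam ^ 2 * D * |A k j + A j k|)

lemma tiltedExponent_add (lam : ℝ) (s : Finset ι) (γ c v : ι → ℝ) :
    tiltedExponent A p lam s γ v + ∑ j ∈ s, c j * (v j - p j) =
      tiltedExponent A p lam s (γ + c) v := by
  simp only [tiltedExponent, Pi.add_apply, add_mul, sum_add_distrib]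
  ring

lemma quadForm_insert [DecidableEq ι] {k : ι} (hk : A k k = 0) {t : Finset ι} (hkt : k ∉ t)
    (v : ι → ℝ) :
    quadForm A (insert k t) v = quadForm A t v + v k * ∑ j ∈ t, (A k j + A j k) * v j := by
  have hcross : v k * ∑ j ∈ t, (A k j + A j k) * v j =
      ∑ j ∈ t, A k j * v k * v j + ∑ i ∈ t, A i k * v i * v k := by
    rw [mul_sum, ← sum_add_distrib]
    exact sum_congr rfl fun j _ => by ring
  simp only [quadForm, sum_insert hkt, hk, sum_add_distrib, hcross]
  ring

lemma quadForm_insert_update [DecidableEq ι] {k : ι} (hk : A k k = 0) {t : Finset ι}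
    (hkt : k ∉ t) (v : ι → ℝ) (y : ℝ) :
    quadForm A (insert k t) (update v k y) =
      quadForm A t v + y * ∑ j ∈ t, (A k j + A j k) * v j := by
  have hv : ∀ j ∈ t, update v k y j = v j := fun j hj =>
    update_of_ne (ne_of_mem_of_not_mem hj hkt) _ _
  rw [quadForm_insert A hk hkt, update_self]
  congr 1
  · exact sum_congr rfl fun i hi => sum_congr rfl fun j hj => by rw [hv i hi, hv j hj]
  · exact congrArg _ (sum_congr rfl fun j hj => by rw [hv j hj])

lemma tiltedExponent_insert_update [DecidableEq ι] (lam : ℝ) {k : ι} (hk : A k k = 0)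
    {t : Finset ι} (hkt : k ∉ t) (γ v : ι → ℝ) (y : ℝ) :
    tiltedExponent A p lam (insert k t) γ (update v k y) =
      tiltedExponent A p lam t γ v + lam * p k * ∑ j ∈ t, (A k j + A j k) * (v j - p j) +
        (y - p k) * (lam * ∑ j ∈ t, (A k j + A j k) * v j + γ k) := by
  have hv : ∀ j ∈ t, γ j * (update v k y j - p j) = γ j * (v j - p j) := fun j hj => by
    rw [update_of_ne (ne_of_mem_of_not_mem hj hkt)]
  rw [tiltedExponent, tiltedExponent, sum_insert hkt, update_self, sum_congr rfl hv]
  simp only [quadForm_insert_update A hk hkt, quadForm_insert A hk hkt, mul_sub, sum_sub_distrib]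
  ring

lemma sum_tiltIncrement_mul (lam D : ℝ) (k : ι) (t : Finset ι) (v : ι → ℝ) :
    ∑ j ∈ t, tiltIncrement A p lam D k j * (v j - p j) =
      lam * p k * ∑ j ∈ t, (A k j + A j k) * (v j - p j) +
        2 * lam ^ 2 * D * p k * ∑ j ∈ t, |A k j + A j k| * (v j - p j) := by
  rw [mul_sum, mul_sum, ← sum_add_distrib]
  exact sum_congr rfl fun j _ => by rw [tiltIncrement]; ring

end quadForm

section influence

variable {ι : Type*} {A : Matrix ι ι ℝ} {p : ι → ℝ}

lemma influence_nonneg (hp0 : 0 ≤ p) (s : Finset ι) (j : ι) : 0 ≤ influence A p s j :=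
  sum_nonneg fun k _ => mul_nonneg (hp0 k) (abs_nonneg _)

variable [Fintype ι]

lemma influence_le_influence_univ (hp0 : 0 ≤ p) (s : Finset ι) (j : ι) :
    influence A p s j ≤ influence A p univ j :=
  sum_le_sum_of_subset_of_nonneg (subset_univ s) fun k _ _ => mul_nonneg (hp0 k) (abs_nonneg _)

lemma influence_le {D : ℝ} (hp0 : 0 ≤ p) (hp1 : p ≤ 1) (hrow : ∀ i, ∑ j, |A i j + A j i| ≤ D)
    (s : Finset ι) (j : ι) : influence A p s j ≤ D :=
  calc influence A p s j ≤ influence A p univ j := influence_le_influence_univ hp0 s j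
    _ ≤ ∑ k, |A j k + A k j| := sum_le_sum fun k _ => by
        rw [add_comm]; exact mul_le_of_le_one_left (abs_nonneg _) (hp1 k)
    _ ≤ D := hrow j

lemma influence_compl_insert [DecidableEq ι] {k : ι} {t : Finset ι} (hkt : k ∉ t) (j : ι) :
    influence A p tᶜ j = p k * |A k j + A j k| + influence A p (insert k t)ᶜ j := by
  rw [influence, influence, compl_insert]
  exact (add_sum_erase _ _ (mem_compl.2 hkt)).symm

lemma sum_mul_influence_le (hp0 : 0 ≤ p) :
    ∑ j, p j * influence A p univ j ≤ 2 * ∑ i, ∑ j, |A i j| * p i * p j := calc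
  ∑ j, p j * influence A p univ j ≤ ∑ j, ∑ k, (|A k j| * p k * p j + |A j k| * p j * p k) := by
      refine sum_le_sum fun j _ => ?_
      rw [influence, mul_sum]
      refine sum_le_sum fun k _ => ?_
      have : 0 ≤ p j * p k := mul_nonneg (hp0 j) (hp0 k)
      nlinarith [abs_add_le (A k j) (A j k)]
  _ = 2 * ∑ i, ∑ j, |A i j| * p i * p j := by
      simp only [sum_add_distrib]
      rw [sum_comm]
      ring

end influence

lemma abs_tiltIncrement_le {ι : Type*} {A : Matrix ι ι ℝ} {p : ι → ℝ} {lam D : ℝ} {k : ι}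
    (hpk : 0 ≤ p k) (hD : 0 ≤ D) (hlamD : |lam| * D ≤ 1 / 8) (j : ι) :
    |tiltIncrement A p lam D k j| ≤ 2 * |lam| * (p k * |A k j + A j k|) := by
  have hlam : lam ^ 2 * D ≤ |lam| / 8 := by
    rw [← sq_abs, sq, mul_assoc]; nlinarith [abs_nonneg lam]
  have hB : 0 ≤ p k * |A k j + A j k| := mul_nonneg hpk (abs_nonneg _)
  calc |tiltIncrement A p lam D k j|
      ≤ p k * (|lam| * |A k j + A j k| + 2 * lam ^ 2 * D * |A k j + A j k|) := by
        rw [tiltIncrement, abs_mul, abs_of_nonneg hpk]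
        gcongr
        refine (abs_add_le _ _).trans_eq ?_
        rw [abs_mul, abs_mul, abs_abs, abs_of_nonneg (by positivity : 0 ≤ 2 * lam ^ 2 * D)]
    _ ≤ 2 * |lam| * (p k * |A k j + A j k|) := by
        nlinarith [mul_le_mul_of_nonneg_left hlam hB, mul_nonneg hB (abs_nonneg lam)]

lemma abs_mul_add_le_one {lam D L K g : ℝ} (hL : |L| ≤ D) (hKD : K ≤ D)
    (hg : |g| ≤ 2 * |lam| * K) (hlamD : |lam| * D ≤ 1 / 8) : |lam * L + g| ≤ 1 := by
  have hlamL : |lam| * |L| ≤ |lam| * D := mul_le_mul_of_nonneg_left hL (abs_nonneg lam)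
  have hlamK : |lam| * K ≤ |lam| * D := mul_le_mul_of_nonneg_left hKD (abs_nonneg lam)
  have := abs_add_le (lam * L) g
  rw [abs_mul] at this
  linarith

lemma mul_sq_mul_add_le {q lam D L Labs K g : ℝ} (hq : 0 ≤ q) (hL : |L| ≤ Labs)
    (hLabs : Labs ≤ D) (hK0 : 0 ≤ K) (hKD : K ≤ D) (hg : |g| ≤ 2 * |lam| * K) :
    q * (lam * L + g) ^ 2 ≤ 2 * lam ^ 2 * D * q * Labs + 8 * lam ^ 2 * D * q * K := by
  have hLsq : L ^ 2 ≤ D * Labs := by nlinarith [sq_abs L, abs_nonneg L]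
  have hgsq : g ^ 2 ≤ 4 * lam ^ 2 * (D * K) := calc
    g ^ 2 = |g| ^ 2 := (sq_abs _).symm
    _ ≤ (2 * |lam| * K) ^ 2 := by gcongr
    _ = 4 * lam ^ 2 * (K * K) := by rw [mul_pow, mul_pow, sq_abs]; ring
    _ ≤ 4 * lam ^ 2 * (D * K) := by gcongr
  calc q * (lam * L + g) ^ 2 ≤ q * (2 * (lam ^ 2 * L ^ 2) + 2 * g ^ 2) := by
        gcongr; nlinarith [sq_nonneg (lam * L - g)]
    _ ≤ q * (2 * (lam ^ 2 * (D * Labs)) + 2 * (4 * lam ^ 2 * (D * K))) := by gcongr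
    _ = 2 * lam ^ 2 * D * q * Labs + 8 * lam ^ 2 * D * q * K := by ring

lemma centered_bernoulli_mgf_le {q u : ℝ} (hq : 0 ≤ q) (hu : |u| ≤ 1) :
    (1 - q) * Real.exp (-q * u) + q * Real.exp ((1 - q) * u) ≤ Real.exp (q * u ^ 2) := by
  have hexp : Real.exp u - 1 ≤ u + u ^ 2 := by
    linarith [(abs_le.1 (Real.abs_exp_sub_one_sub_id_le hu)).2]
  calc (1 - q) * Real.exp (-q * u) + q * Real.exp ((1 - q) * u)
      = Real.exp (-q * u) * (q * (Real.exp u - 1) + 1) := by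
        rw [show (1 - q) * u = -q * u + u by ring, Real.exp_add]; ring
    _ ≤ Real.exp (-q * u) * Real.exp (q * (u + u ^ 2)) := by
        gcongr
        exact (Real.add_one_le_exp _).trans (Real.exp_le_exp.2 (by gcongr))
    _ = Real.exp (q * u ^ 2) := by rw [← Real.exp_add]; ring_nf

section bernoulliExpect

variable {ι : Type*} [Fintype ι] [DecidableEq ι]

/-- `𝔼 G(X)` for `X ∈ {0,1}^ι` with independent coordinates `X i ∼ Bernoulli (p i)`. -/
noncomputable def bernoulliExpect (p : ι → ℝ) (G : (ι → ℝ) → ℝ) : ℝ :=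
  ∑ x : ι → Bool, (∏ i, if x i then p i else 1 - p i) * G fun i => if x i then 1 else 0

lemma bernoulliExpect_mono {p : ι → ℝ} (hp0 : 0 ≤ p) (hp1 : p ≤ 1) {G H : (ι → ℝ) → ℝ}
    (h : ∀ v ∈ Set.Icc (0 : ι → ℝ) 1, G v ≤ H v) :
    bernoulliExpect p G ≤ bernoulliExpect p H := by
  refine sum_le_sum fun x _ => mul_le_mul_of_nonneg_left (h _ ⟨fun i => ?_, fun i => ?_⟩) ?_
  · dsimp only; split_ifs <;> norm_num
  · dsimp only; split_ifs <;> norm_num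
  · refine prod_nonneg fun i _ => ?_
    split_ifs
    · exact hp0 i
    · exact sub_nonneg.2 (hp1 i)

variable (p : ι → ℝ)

lemma bernoulliExpect_const (c : ℝ) : bernoulliExpect p (fun _ => c) = c := by
  have h := Fintype.prod_sum fun i (b : Bool) => if b then p i else 1 - p i
  simp only [Fintype.sum_bool, if_true, Bool.false_eq_true, if_false, add_sub_cancel,
    prod_const_one] at h
  rw [bernoulliExpect, ← sum_mul, ← h, one_mul]

lemma bernoulliExpect_const_mul (c : ℝ) (G : (ι → ℝ) → ℝ) :
    bernoulliExpect p (fun v => c * G v) = c * bernoulliExpect p G := by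
  simp only [bernoulliExpect, mul_sum]
  exact sum_congr rfl fun x _ => by ring

lemma bernoulliExpect_sum {κ : Type*} (s : Finset κ) (G : κ → (ι → ℝ) → ℝ) :
    bernoulliExpect p (fun v => ∑ a ∈ s, G a v) = ∑ a ∈ s, bernoulliExpect p (G a) := by
  simp only [bernoulliExpect, mul_sum]
  exact sum_comm

lemma bernoulliExpect_eq_update (k : ι) (G : (ι → ℝ) → ℝ) :
    bernoulliExpect p G =
      bernoulliExpect p (fun v => (1 - p k) * G (update v k 0) + p k * G (update v k 1)) := by
  set e := (Equiv.piSplitAt k fun _ => Bool).symm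
  have hweight : ∀ b y, (∏ i, if e (b, y) i then p i else 1 - p i) =
      (if b then p k else 1 - p k) * ∏ j : {j // j ≠ k}, if y j then p j else 1 - p j := by
    intro b y
    rw [Fintype.prod_eq_mul_prod_subtype_ne _ k]
    simp only [e, Equiv.piSplitAt_symm_apply]
    exact congrArg _ (prod_congr rfl fun j _ => by rw [dif_neg j.2])
  have hupdate : ∀ b y, update (fun i => if e (b, y) i then (1 : ℝ) else 0) k 0 =
        (fun i => if e (false, y) i then 1 else 0) ∧
      update (fun i => if e (b, y) i then (1 : ℝ) else 0) k 1 =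
        (fun i => if e (true, y) i then 1 else 0) := by
    refine fun b y => ⟨funext fun i => ?_, funext fun i => ?_⟩ <;> by_cases hi : i = k <;>
      simp [e, Equiv.piSplitAt_symm_apply, hi]
  simp only [bernoulliExpect, ← e.sum_comp, Fintype.sum_prod_type, hweight, hupdate,
    Fintype.sum_bool, if_true, Bool.false_eq_true, if_false, ← sum_add_distrib]
  exact sum_congr rfl fun y _ => by ring

lemma bernoulliExpect_apply (i : ι) : bernoulliExpect p (fun v => v i) = p i := by
  rw [bernoulliExpect_eq_update p i]
  simp only [update_self, mul_zero, mul_one, zero_add]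
  exact bernoulliExpect_const p (p i)

lemma bernoulliExpect_mul_apply {i j : ι} (hij : i ≠ j) :
    bernoulliExpect p (fun v => v i * v j) = p i * p j := by
  rw [bernoulliExpect_eq_update p i]
  simp only [update_self, update_of_ne hij.symm, zero_mul, mul_zero, one_mul, zero_add]
  rw [bernoulliExpect_const_mul, bernoulliExpect_apply]

lemma bernoulliExpect_quadForm {A : Matrix ι ι ℝ} (hA : ∀ i, A i i = 0) :
    bernoulliExpect p (quadForm A univ) = quadForm A univ p := by
  unfold quadForm
  simp_rw [bernoulliExpect_sum]
  refine sum_congr rfl fun i _ => sum_congr rfl fun j _ => ?_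
  by_cases hij : i = j
  · subst hij
    simp [hA, bernoulliExpect_const]
  · simp_rw [mul_assoc, bernoulliExpect_const_mul, bernoulliExpect_mul_apply p hij]

end bernoulliExpect

section law

variable {ι : Type*} [Fintype ι] [DecidableEq ι] {Ω : Type*} [MeasurableSpace Ω] {μ : Measure Ω}

lemma integral_comp_eq_sum_prod_measureReal [IsFiniteMeasure μ] {η : ι → Ω → Bool}
    (hη : ∀ i, Measurable (η i)) (hindep : iIndepFun η μ) (F : (ι → Bool) → ℝ) :
    ∫ ω, F (fun i => η i ω) ∂μ = ∑ x, (∏ i, μ.real (η i ⁻¹' {x i})) * F x := by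
  have hlaw : ∀ x : ι → Bool,
      (μ.map fun ω i => η i ω).real {x} = ∏ i, μ.real (η i ⁻¹' {x i}) := fun x => by
    have hset : (fun ω i => η i ω) ⁻¹' {x} = ⋂ i ∈ univ, η i ⁻¹' {x i} := by
      ext ω; simp [funext_iff]
    rw [map_measureReal_apply (measurable_pi_lambda _ hη) (measurableSet_singleton x), hset,
      measureReal_def, hindep.measure_inter_preimage_eq_mul _ fun i _ => measurableSet_singleton _,
      ENNReal.toReal_prod]
    rfl
  rw [← integral_map (measurable_pi_lambda _ hη).aemeasurable
    Measurable.of_discrete.aestronglyMeasurable, integral_fintype .of_finite]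
  simp only [hlaw, smul_eq_mul]

lemma integral_comp_eq_bernoulliExpect [IsProbabilityMeasure μ] {ξ : ι → Ω → ℝ}
    (hmeas : ∀ i, Measurable (ξ i)) (hval : ∀ i ω, ξ i ω = 0 ∨ ξ i ω = 1)
    (hindep : iIndepFun ξ μ) {p : ι → ℝ} (hprob : ∀ i, μ.real {ω | ξ i ω = 1} = p i)
    (G : (ι → ℝ) → ℝ) :
    ∫ ω, G (fun i => ξ i ω) ∂μ = bernoulliExpect p G := by
  have hdec : Measurable fun t : ℝ => decide (t = 1) :=
    measurable_to_bool (by convert measurableSet_singleton (1 : ℝ); ext; simp)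
  set η : ι → Ω → Bool := fun i => (fun t => decide (t = 1)) ∘ ξ i
  have hη : ∀ i, Measurable (η i) := fun i => hdec.comp (hmeas i)
  have hξ : ∀ ω, (fun i => ξ i ω) = fun i => if η i ω then 1 else 0 := fun ω => funext fun i => by
    rcases hval i ω with h | h <;> simp [η, h]
  have htrue : ∀ i, η i ⁻¹' {true} = {ω | ξ i ω = 1} := fun i => by ext; simp [η]
  have hcoord : ∀ i b, μ.real (η i ⁻¹' {b}) = if b then p i else 1 - p i := fun i b => by
    cases b
    · rw [show ({false} : Set Bool) = {true}ᶜ by ext; simp, Set.preimage_compl,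
        probReal_compl_eq_one_sub (hη i (measurableSet_singleton _)), htrue, hprob]
      rfl
    · rw [htrue, hprob]
      rfl
  simp_rw [hξ]
  rw [integral_comp_eq_sum_prod_measureReal (F := fun x => G fun i => if x i then 1 else 0) hη
    (hindep.comp _ fun _ => hdec)]
  simp only [hcoord]
  rfl

end law

section tilt

variable {ι : Type*} [Fintype ι] [DecidableEq ι] {A : Matrix ι ι ℝ} {p : ι → ℝ} {D lam : ℝ}

lemma exp_tiltedExponent_insert_update_le (hp0 : 0 ≤ p) (hp1 : p ≤ 1)
    (hrow : ∀ i, ∑ j, |A i j + A j i| ≤ D) (hlamD : |lam| * D ≤ 1 / 8) {k : ι} (hk : A k k = 0)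
    {t : Finset ι} (hkt : k ∉ t) {γ : ι → ℝ} (hγ : |γ k| ≤ 2 * |lam| * influence A p univ k)
    {v : ι → ℝ} (hv : v ∈ Set.Icc 0 1) :
    (1 - p k) * Real.exp (tiltedExponent A p lam (insert k t) γ (update v k 0)) +
        p k * Real.exp (tiltedExponent A p lam (insert k t) γ (update v k 1)) ≤
      Real.exp (10 * lam ^ 2 * D * (p k * influence A p univ k)) *
        Real.exp (tiltedExponent A p lam t (γ + tiltIncrement A p lam D k) v) := by
  set K := influence A p univ k
  set L := ∑ j ∈ t, (A k j + A j k) * v j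
  set Labs := ∑ j ∈ t, |A k j + A j k| * v j
  set u := lam * L + γ k
  have hK0 : 0 ≤ K := influence_nonneg hp0 _ _
  have hKD : K ≤ D := influence_le hp0 hp1 hrow _ _
  have hL : |L| ≤ Labs := (abs_sum_le_sum_abs _ _).trans_eq
    (sum_congr rfl fun j _ => by rw [abs_mul, abs_of_nonneg (hv.1 j)])
  have hLabs : Labs ≤ D := calc
    Labs ≤ ∑ j ∈ t, |A k j + A j k| :=
      sum_le_sum fun j _ => mul_le_of_le_one_right (abs_nonneg _) (hv.2 j)
    _ ≤ ∑ j, |A k j + A j k| :=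
      sum_le_sum_of_subset_of_nonneg (subset_univ t) fun j _ _ => abs_nonneg _
    _ ≤ D := hrow k
  have hLabs_split : Labs =
      ∑ j ∈ t, |A k j + A j k| * (v j - p j) + ∑ j ∈ t, |A k j + A j k| * p j := by
    rw [← sum_add_distrib]; exact sum_congr rfl fun j _ => by ring
  have hLabsp : ∑ j ∈ t, |A k j + A j k| * p j ≤ K := by
    refine (sum_le_sum fun j _ => le_of_eq ?_).trans (influence_le_influence_univ hp0 t k)
    rw [add_comm, mul_comm]
  have hsq := mul_sq_mul_add_le (hp0 k) hL hLabs hK0 hKD hγ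
  have hsq_mean := mul_le_mul_of_nonneg_left hLabsp
    (by have : 0 ≤ p k := hp0 k; have := hK0.trans hKD; positivity : 0 ≤ 2 * lam ^ 2 * D * p k)
  have hsplit : ∀ y : ℝ, tiltedExponent A p lam (insert k t) γ (update v k y) =
      tiltedExponent A p lam t γ v + lam * p k * ∑ j ∈ t, (A k j + A j k) * (v j - p j) +
        (y - p k) * u := tiltedExponent_insert_update A p lam hk hkt γ v
  set E := tiltedExponent A p lam t γ v + lam * p k * ∑ j ∈ t, (A k j + A j k) * (v j - p j)
  calc (1 - p k) * Real.exp (tiltedExponent A p lam (insert k t) γ (update v k 0)) +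
        p k * Real.exp (tiltedExponent A p lam (insert k t) γ (update v k 1))
      = Real.exp E * ((1 - p k) * Real.exp (-p k * u) + p k * Real.exp ((1 - p k) * u)) := by
        simp only [hsplit, Real.exp_add]; ring_nf
    _ ≤ Real.exp E * Real.exp (p k * u ^ 2) := by
        gcongr
        exact centered_bernoulli_mgf_le (hp0 k) (abs_mul_add_le_one (hL.trans hLabs) hKD hγ hlamD)
    _ ≤ _ := by
        rw [← Real.exp_add, ← Real.exp_add, Real.exp_le_exp, ← tiltedExponent_add,
          sum_tiltIncrement_mul]
        rw [hLabs_split] at hsq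
        linarith

theorem bernoulliExpect_exp_tiltedExponent_le (hp0 : 0 ≤ p) (hp1 : p ≤ 1)
    (hdiag : ∀ i, A i i = 0) (hrow : ∀ i, ∑ j, |A i j + A j i| ≤ D) (hlamD : |lam| * D ≤ 1 / 8)
    (s : Finset ι) (γ : ι → ℝ) (hγ : ∀ j, |γ j| ≤ 2 * |lam| * influence A p sᶜ j) :
    bernoulliExpect p (fun v => Real.exp (tiltedExponent A p lam s γ v)) ≤
      Real.exp (10 * lam ^ 2 * D * ∑ j ∈ s, p j * influence A p univ j) := by
  induction s using Finset.induction_on generalizing γ with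
  | empty => simp [tiltedExponent, quadForm, bernoulliExpect_const]
  | insert k t hkt ih =>
    have hD : 0 ≤ D := (sum_nonneg fun j _ => abs_nonneg _).trans (hrow k)
    have hγ' : ∀ j, |(γ + tiltIncrement A p lam D k) j| ≤ 2 * |lam| * influence A p tᶜ j :=
      fun j => by
        rw [Pi.add_apply, influence_compl_insert (A := A) (p := p) hkt j]
        linarith [abs_add_le (γ j) (tiltIncrement A p lam D k j), hγ j,
          abs_tiltIncrement_le (A := A) (hp0 k) hD hlamD j]
    have hγk : |γ k| ≤ 2 * |lam| * influence A p univ k :=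
      (hγ k).trans (by gcongr; exact influence_le_influence_univ hp0 _ k)
    set cost := 10 * lam ^ 2 * D * (p k * influence A p univ k)
    calc bernoulliExpect p (fun v => Real.exp (tiltedExponent A p lam (insert k t) γ v))
        = bernoulliExpect p (fun v =>
            (1 - p k) * Real.exp (tiltedExponent A p lam (insert k t) γ (update v k 0)) +
              p k * Real.exp (tiltedExponent A p lam (insert k t) γ (update v k 1))) :=
          bernoulliExpect_eq_update p k _
      _ ≤ bernoulliExpect p (fun v => Real.exp cost *
            Real.exp (tiltedExponent A p lam t (γ + tiltIncrement A p lam D k) v)) :=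
          bernoulliExpect_mono hp0 hp1 fun v hv =>
            exp_tiltedExponent_insert_update_le hp0 hp1 hrow hlamD (hdiag k) hkt hγk hv
      _ = Real.exp cost * bernoulliExpect p (fun v =>
            Real.exp (tiltedExponent A p lam t (γ + tiltIncrement A p lam D k) v)) :=
          bernoulliExpect_const_mul p _ _
      _ ≤ Real.exp cost * Real.exp (10 * lam ^ 2 * D * ∑ j ∈ t, p j * influence A p univ j) := by
          gcongr; exact ih _ hγ'
      _ = _ := by rw [← Real.exp_add, sum_insert hkt, mul_add]

end tilt

section sumNorm

variable {m : ℕ} (A : Matrix (Fin m) (Fin m) ℝ)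

lemma rowSumNorm_nonneg : 0 ≤ rowSumNorm A :=
  Real.iSup_nonneg fun _ => sum_nonneg fun _ _ => abs_nonneg _

lemma colSumNorm_nonneg : 0 ≤ colSumNorm A :=
  Real.iSup_nonneg fun _ => sum_nonneg fun _ _ => abs_nonneg _

lemma sum_abs_add_transpose_le (i : Fin m) :
    ∑ j, |A i j + A j i| ≤ rowSumNorm A + colSumNorm A := calc
  ∑ j, |A i j + A j i| ≤ ∑ j, |A i j| + ∑ j, |A j i| :=
      (sum_le_sum fun _ _ => abs_add_le _ _).trans_eq sum_add_distrib
  _ ≤ rowSumNorm A + colSumNorm A :=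
      add_le_add (le_ciSup (f := fun i => ∑ j, |A i j|) (Set.finite_range _).bddAbove i)
        (le_ciSup (f := fun j => ∑ i, |A i j|) (Set.finite_range _).bddAbove i)

variable {A}

lemma abs_mul_add_sumNorm_le {lam : ℝ}
    (hlam : |lam| ≤ 1 / (16 * max (colSumNorm A) (rowSumNorm A))) :
    |lam| * (rowSumNorm A + colSumNorm A) ≤ 1 / 8 := by
  have hD0 := add_nonneg (rowSumNorm_nonneg A) (colSumNorm_nonneg A)
  set M := max (colSumNorm A) (rowSumNorm A)
  have hD : rowSumNorm A + colSumNorm A ≤ 2 * M := by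
    linarith [le_max_left (colSumNorm A) (rowSumNorm A), le_max_right (colSumNorm A) (rowSumNorm A)]
  rcases (le_max_of_le_left (colSumNorm_nonneg A) : 0 ≤ M).eq_or_lt with hM | hM
  · nlinarith [abs_nonneg lam]
  · have hM' : M ≠ 0 := hM.ne'
    calc |lam| * (rowSumNorm A + colSumNorm A) ≤ 1 / (16 * M) * (2 * M) := by gcongr
      _ = 1 / 8 := by field_simp; norm_num

end sumNorm

end BernoulliQuadratic

open BernoulliQuadratic in
theorem bernoulli_quadratic_mgf_offdiag_general
    (m : ℕ)
    (Ω : Type) (mΩ : MeasurableSpace Ω) (μ : Measure Ω)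
    (hμ : IsProbabilityMeasure μ)
    (ξ : Fin m → Ω → ℝ)
    (hmeas : ∀ i, Measurable (ξ i))
    (hval : ∀ i ω, ξ i ω = 0 ∨ ξ i ω = 1)
    (p : Fin m → ℝ) (hp0 : ∀ i, 0 ≤ p i) (hp1 : ∀ i, p i ≤ 1)
    (hprob : ∀ i, μ {ω | ξ i ω = 1} = ENNReal.ofReal (p i))
    (hindep : iIndepFun ξ μ)
    (A : Matrix (Fin m) (Fin m) ℝ)
    (hdiag : ∀ i, A i i = 0)
    (lam : ℝ)
    (hlam : |lam| ≤ 1 / (16 * max (colSumNorm A) (rowSumNorm A))) :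
    (∫ ω, Real.exp (lam *
        ((∑ i, ∑ j, A i j * ξ i ω * ξ j ω) -
          ∫ ω', (∑ i, ∑ j, A i j * ξ i ω' * ξ j ω') ∂μ)) ∂μ) ≤
      Real.exp (36.5 * lam ^ 2 * (rowSumNorm A + colSumNorm A) *
        Real.exp (8 * |lam| * (rowSumNorm A + colSumNorm A)) *
        ∑ i, ∑ j, if i = j then 0 else |A i j| * p i * p j) := by
  set D := rowSumNorm A + colSumNorm A
  set T := ∑ i, ∑ j, |A i j| * p i * p j
  have hE := integral_comp_eq_bernoulliExpect hmeas hval hindep fun i => by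
    rw [measureReal_def, hprob i, ENNReal.toReal_ofReal (hp0 i)]
  have hmean : ∫ ω, (∑ i, ∑ j, A i j * ξ i ω * ξ j ω) ∂μ = quadForm A univ p :=
    (hE (quadForm A univ)).trans (bernoulliExpect_quadForm p hdiag)
  have hoffdiag : (∑ i, ∑ j, if i = j then 0 else |A i j| * p i * p j) = T :=
    sum_congr rfl fun i _ => sum_congr rfl fun j _ => by split_ifs with h <;> simp [h, hdiag]
  have hD : 0 ≤ D := add_nonneg (rowSumNorm_nonneg A) (colSumNorm_nonneg A)
  have hP : 0 ≤ lam ^ 2 * D * T := by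
    have : 0 ≤ T := sum_nonneg fun i _ => sum_nonneg fun j _ => by
      have := hp0 i; have := hp0 j; positivity
    positivity
  have hX : ∑ j, p j * influence A p univ j ≤ 2 * T := sum_mul_influence_le hp0
  have he : 1 ≤ Real.exp (8 * |lam| * D) := Real.one_le_exp (by positivity)
  rw [hmean, hoffdiag]
  calc ∫ ω, Real.exp (lam * ((∑ i, ∑ j, A i j * ξ i ω * ξ j ω) - quadForm A univ p)) ∂μ
      = bernoulliExpect p (fun v => Real.exp (tiltedExponent A p lam univ 0 v)) := by
        rw [← hE]; simp [tiltedExponent, quadForm]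
    _ ≤ Real.exp (10 * lam ^ 2 * D * ∑ j, p j * influence A p univ j) :=
        bernoulliExpect_exp_tiltedExponent_le hp0 hp1 hdiag (sum_abs_add_transpose_le A)
          (abs_mul_add_sumNorm_le hlam) univ 0 (by simp [influence])
    _ ≤ Real.exp (36.5 * lam ^ 2 * D * Real.exp (8 * |lam| * D) * T) := by
        rw [Real.exp_le_exp]
        nlinarith [mul_le_mul_of_nonneg_left hX (by positivity : 0 ≤ 10 * lam ^ 2 * D),
          mul_le_mul_of_nonneg_left he hP]

/-- Corollary: mgf for a Bernoulli quadratic form, zero-diagonal case,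
with `D_max = ‖A‖_∞ + ‖A‖₁`. -/
theorem bernoulli_quadratic_mgf_offdiag
    (m : ℕ) (hm : 0 < m)
    (Ω : Type) (mΩ : MeasurableSpace Ω) (μ : Measure Ω)
    (hμ : IsProbabilityMeasure μ)
    (ξ : Fin m → Ω → ℝ)
    (hmeas : ∀ i, Measurable (ξ i))
    (hval : ∀ i ω, ξ i ω = 0 ∨ ξ i ω = 1)
    (p : Fin m → ℝ) (hp0 : ∀ i, 0 ≤ p i) (hp1 : ∀ i, p i ≤ 1)
    (hprob : ∀ i, μ {ω | ξ i ω = 1} = ENNReal.ofReal (p i))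
    (hindep : iIndepFun ξ μ)
    (A : Matrix (Fin m) (Fin m) ℝ)
    (hdiag : ∀ i, A i i = 0)
    (lam : ℝ)
    (hlam : |lam| ≤ 1 / (16 * max (colSumNorm A) (rowSumNorm A))) :
    (∫ ω, Real.exp (lam *
        ((∑ i, ∑ j, A i j * ξ i ω * ξ j ω) -
          ∫ ω', (∑ i, ∑ j, A i j * ξ i ω' * ξ j ω') ∂μ)) ∂μ) ≤
      Real.exp (36.5 * lam ^ 2 * (rowSumNorm A + colSumNorm A) *
        Real.exp (8 * |lam| * (rowSumNorm A + colSumNorm A)) *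
        ∑ i, ∑ j, if i = j then 0 else |A i j| * p i * p j) :=
  bernoulli_quadratic_mgf_offdiag_general m Ω mΩ μ hμ ξ hmeas hval p hp0 hp1 hprob hindep A hdiag
    lam hlam
end

section
/- Let B₀ = (b_{ij}) ∈ ℝ^{n×n} be symmetric positive definite with tr(B₀) = n, let |B₀| = (|b_{ij}|) be its entrywise absolute value, b_∞ = max_j b_{jj}, and 1 ≤ s₀ ≤ n. Then: (i) ρ_max(s₀, (|b_{ij}|)) ≥ b_∞ ≥ 1; (ii) ρ_max(s₀, (|b_{ij}|)) = max over subsets S ⊆ [n] with |S| = s₀ of λ_max(|B₀|_{S,S}), where |B₀|_{S,S} is the principal submatrix of |B₀| with rows and columns indexed by S; (iii) ρ_max(s₀, (|b_{ij}|)) ≤ √s₀ ‖B₀‖₂; and consequently ψ_B(s₀) ≤ √s₀. -/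
open MeasureTheory Matrix Finset

/-- Euclidean (ℓ₂) norm of a vector. -/
noncomputable def e2 {ι : Type*} [Fintype ι] (v : ι → ℝ) : ℝ :=
  Real.sqrt (∑ i, v i ^ 2)

/-- Operator (spectral) norm of a matrix. -/
noncomputable def opNorm {α β : Type*} [Fintype α] [Fintype β]
    (M : Matrix α β ℝ) : ℝ :=
  sSup {r | ∃ q : β → ℝ, e2 q ≤ 1 ∧ r = e2 (M.mulVec q)}

/-- A vector with at most `s₀` nonzero entries. -/
def IsSparse {ι : Type*} [Fintype ι] (s₀ : ℕ) (v : ι → ℝ) : Prop :=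
  ∃ S : Finset ι, S.card ≤ s₀ ∧ ∀ i ∉ S, v i = 0

/-- `ρ_max(s₀, (|b_ij|))`: maximum of `∑ |b_ij||q_i||q_j|` over `s₀`-sparse unit vectors. -/
noncomputable def rhoMax {n : ℕ} (s₀ : ℕ) (B : Matrix (Fin n) (Fin n) ℝ) : ℝ :=
  sSup {r | ∃ q : Fin n → ℝ, e2 q = 1 ∧ IsSparse s₀ q ∧
    r = ∑ i, ∑ j, |B i j| * |q i| * |q j|}

/-- Largest eigenvalue of a symmetric matrix, via the Rayleigh quotient. -/
noncomputable def lamMax {ι : Type*} [Fintype ι] (M : Matrix ι ι ℝ) : ℝ :=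
  sSup {r | ∃ q : ι → ℝ, e2 q = 1 ∧ r = q ⬝ᵥ M.mulVec q}

/- ### Auxiliary lemmas -/

lemma e2_nonneg {ι : Type*} [Fintype ι] (v : ι → ℝ) : 0 ≤ e2 v := Real.sqrt_nonneg _

lemma e2_sq {ι : Type*} [Fintype ι] (v : ι → ℝ) : e2 v ^ 2 = ∑ i, v i ^ 2 :=
  Real.sq_sqrt (Finset.sum_nonneg fun _ _ => sq_nonneg _)

lemma sum_sq_of_e2_eq_one {ι : Type*} [Fintype ι] {v : ι → ℝ} (h : e2 v = 1) :
    ∑ i, v i ^ 2 = 1 := by rw [← e2_sq, h, one_pow]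

lemma abs_le_e2 {ι : Type*} [Fintype ι] (v : ι → ℝ) (i : ι) : |v i| ≤ e2 v := by
  rw [← Real.sqrt_sq_eq_abs]
  exact Real.sqrt_le_sqrt (Finset.single_le_sum (fun j _ => sq_nonneg (v j)) (Finset.mem_univ i))

lemma e2_eq_of_sum_sq_eq {ι κ : Type*} [Fintype ι] [Fintype κ] {v : ι → ℝ} {w : κ → ℝ}
    (h : ∑ i, v i ^ 2 = ∑ j, w j ^ 2) : e2 v = e2 w := by
  unfold e2; rw [h]

lemma rhoSet_bddAbove {n : ℕ} (s₀ : ℕ) (B : Matrix (Fin n) (Fin n) ℝ) :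
    BddAbove {r | ∃ q : Fin n → ℝ, e2 q = 1 ∧ IsSparse s₀ q ∧
      r = ∑ i, ∑ j, |B i j| * |q i| * |q j|} := by
  refine ⟨∑ i, ∑ j, |B i j|, fun r hr => ?_⟩
  obtain ⟨q, hq, -, rfl⟩ := hr
  refine Finset.sum_le_sum fun i _ => Finset.sum_le_sum fun j _ => ?_
  have hi : |q i| ≤ 1 := hq ▸ abs_le_e2 q i
  have hj : |q j| ≤ 1 := hq ▸ abs_le_e2 q j
  calc |B i j| * |q i| * |q j| ≤ |B i j| * 1 * 1 := by
        gcongr <;> positivity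
    _ = |B i j| := by ring

lemma lamSet_bddAbove {ι : Type*} [Fintype ι] (M : Matrix ι ι ℝ) :
    BddAbove {r | ∃ q : ι → ℝ, e2 q = 1 ∧ r = q ⬝ᵥ M.mulVec q} := by
  refine ⟨∑ i, ∑ j, |M i j|, fun r hr => ?_⟩
  obtain ⟨q, hq, rfl⟩ := hr
  calc q ⬝ᵥ M.mulVec q = ∑ i, ∑ j, q i * (M i j * q j) := by
        simp [dotProduct, Matrix.mulVec, Finset.mul_sum]
    _ ≤ ∑ i, ∑ j, |M i j| := by
        refine Finset.sum_le_sum fun i _ => Finset.sum_le_sum fun j _ => ?_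
        have hi : |q i| ≤ 1 := hq ▸ abs_le_e2 q i
        have hj : |q j| ≤ 1 := hq ▸ abs_le_e2 q j
        calc q i * (M i j * q j) ≤ |q i * (M i j * q j)| := le_abs_self _
          _ = |M i j| * |q i| * |q j| := by rw [abs_mul, abs_mul]; ring
          _ ≤ |M i j| * 1 * 1 := by gcongr <;> positivity
          _ = |M i j| := by ring

lemma opSet_bddAbove {α β : Type*} [Fintype α] [Fintype β] (M : Matrix α β ℝ) :
    BddAbove {r | ∃ q : β → ℝ, e2 q ≤ 1 ∧ r = e2 (M.mulVec q)} := by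
  refine ⟨Real.sqrt (∑ i, (∑ j, |M i j|) ^ 2), fun r hr => ?_⟩
  obtain ⟨q, hq, rfl⟩ := hr
  unfold e2
  apply Real.sqrt_le_sqrt
  refine Finset.sum_le_sum fun i _ => ?_
  have h1 : |M.mulVec q i| ≤ ∑ j, |M i j| := by
    calc |M.mulVec q i| = |∑ j, M i j * q j| := rfl
      _ ≤ ∑ j, |M i j * q j| := Finset.abs_sum_le_sum_abs _ _
      _ ≤ ∑ j, |M i j| := by
          refine Finset.sum_le_sum fun j _ => ?_
          rw [abs_mul]
          have : |q j| ≤ 1 := le_trans (abs_le_e2 q j) hq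
          nlinarith [abs_nonneg (M i j), abs_nonneg (q j)]
  calc M.mulVec q i ^ 2 = |M.mulVec q i| ^ 2 := (sq_abs _).symm
    _ ≤ (∑ j, |M i j|) ^ 2 := pow_le_pow_left₀ (abs_nonneg _) h1 2

lemma opNorm_nonneg' {α β : Type*} [Fintype α] [Fintype β] (M : Matrix α β ℝ) :
    0 ≤ opNorm M := by
  have h0 : (0 : ℝ) ∈ {r | ∃ q : β → ℝ, e2 q ≤ 1 ∧ r = e2 (M.mulVec q)} :=
    ⟨0, by simp [e2], by simp [e2, Matrix.mulVec_zero]⟩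
  exact le_csSup (opSet_bddAbove M) h0

lemma mulVec_apply_le_opNorm {α β : Type*} [Fintype α] [Fintype β] (M : Matrix α β ℝ)
    {w : β → ℝ} (hw : e2 w ≤ 1) (i : α) : |M.mulVec w i| ≤ opNorm M :=
  le_trans (abs_le_e2 _ i) (le_csSup (opSet_bddAbove M) ⟨w, hw, rfl⟩)

lemma posdef_diag_pos {n : ℕ} {B : Matrix (Fin n) (Fin n) ℝ} (hB : B.PosDef) (j : Fin n) :
    0 < B j j := by
  have h := hB.dotProduct_mulVec_pos (x := Pi.single j 1) (by
    intro h
    have := congrFun h j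
    simp [Pi.single_apply] at this)
  simpa [Matrix.mulVec_single, single_dotProduct] using h

lemma double_sum_restrict {n : ℕ} (S : Finset (Fin n)) (g : Fin n → Fin n → ℝ)
    (q : Fin n → ℝ) (hz : ∀ i ∉ S, q i = 0) :
    ∑ i, ∑ j, g i j * |q i| * |q j|
      = ∑ i : {x // x ∈ S}, ∑ j : {x // x ∈ S}, g i.1 j.1 * |q i.1| * |q j.1| := by
  have inner : ∀ i, ∑ j, g i j * |q i| * |q j| = ∑ j ∈ S, g i j * |q i| * |q j| :=
    fun i => (Finset.sum_subset (Finset.subset_univ S)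
      (fun j _ hj => by rw [hz j hj]; simp)).symm
  calc ∑ i, ∑ j, g i j * |q i| * |q j|
      = ∑ i, ∑ j ∈ S, g i j * |q i| * |q j| := Finset.sum_congr rfl fun i _ => inner i
    _ = ∑ i ∈ S, ∑ j ∈ S, g i j * |q i| * |q j| :=
        (Finset.sum_subset (Finset.subset_univ S) (fun i _ hi => by
          rw [hz i hi]; simp)).symm
    _ = ∑ i : {x // x ∈ S}, ∑ j ∈ S, g i.1 j * |q i.1| * |q j| :=
        (Finset.sum_coe_sort S _).symm
    _ = _ := Finset.sum_congr rfl fun i _ => (Finset.sum_coe_sort S _).symm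

/-- Lemma: bounds on `ρ_max(s₀, (|b_ij|))` and `ψ_B(s₀)`. -/
theorem rhoMax_principal_submatrix_bounds
    (n : ℕ) (hn : 0 < n)
    (B : Matrix (Fin n) (Fin n) ℝ) (hB : B.PosDef) (htr : B.trace = (n : ℝ))
    (s₀ : ℕ) (hs₀ : 1 ≤ s₀) (hs₀n : s₀ ≤ n) :
    -- (i) ρ_max(s₀, (|b_ij|)) ≥ b_∞ ≥ 1
    (⨆ j, B j j) ≤ rhoMax s₀ B ∧ 1 ≤ (⨆ j, B j j) ∧
    -- (ii) ρ_max equals the maximum of λ_max over s₀ × s₀ principal submatrices of |B₀|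
    rhoMax s₀ B = sSup {r | ∃ S : Finset (Fin n), S.card = s₀ ∧
        r = lamMax (Matrix.of fun (i j : {x : Fin n // x ∈ S}) => |B i.1 j.1|)} ∧
    -- (iii) ρ_max ≤ √s₀ ‖B‖₂ and consequently ψ_B(s₀) ≤ √s₀
    rhoMax s₀ B ≤ Real.sqrt s₀ * opNorm B ∧
    rhoMax s₀ B / opNorm B ≤ Real.sqrt s₀ := by
  classical
  -- the set defining rhoMax
  set Rset := {r | ∃ q : Fin n → ℝ, e2 q = 1 ∧ IsSparse s₀ q ∧
    r = ∑ i, ∑ j, |B i j| * |q i| * |q j|} with hRset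
  have hrho : rhoMax s₀ B = sSup Rset := rfl
  -- diagonal entries are attained by coordinate vectors
  have memA : ∀ j : Fin n, B j j ∈ Rset := by
    intro j
    refine ⟨fun i => if i = j then 1 else 0, ?_, ⟨{j}, by simpa using hs₀,
      fun i hi => if_neg (by simpa using hi)⟩, ?_⟩
    · unfold e2
      rw [show ∑ i, (if i = j then (1:ℝ) else 0) ^ 2 = 1 by
        simp [apply_ite (fun x : ℝ => x ^ 2)]]
      exact Real.sqrt_one
    · have : ∑ i, ∑ k, |B i k| * |(if i = j then (1:ℝ) else 0)| * |(if k = j then (1:ℝ) else 0)|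
          = |B j j| := by
        simp [apply_ite (abs : ℝ → ℝ), mul_ite, ite_mul]
      rw [this, abs_of_pos (posdef_diag_pos hB j)]
  have hRbdd : BddAbove Rset := rhoSet_bddAbove s₀ B
  have hRne : Rset.Nonempty := ⟨_, memA ⟨0, hn⟩⟩
  haveI hNE : Nonempty (Fin n) := ⟨⟨0, hn⟩⟩
  have conj1 : (⨆ j, B j j) ≤ rhoMax s₀ B := by
    rw [hrho]
    exact ciSup_le fun j => le_csSup hRbdd (memA j)
  have conj2 : (1 : ℝ) ≤ ⨆ j, B j j := by
    have hbdd : BddAbove (Set.range fun j => B j j) := Set.Finite.bddAbove (Set.finite_range _)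
    have hle : ∀ j, B j j ≤ ⨆ j, B j j := fun j => le_ciSup hbdd j
    have hsum : ∑ j, B j j = (n : ℝ) := by
      simpa [Matrix.trace, Matrix.diag] using htr
    have h2 : (n : ℝ) ≤ (n : ℝ) * ⨆ j, B j j := by
      calc (n : ℝ) = ∑ j, B j j := hsum.symm
        _ ≤ ∑ _j : Fin n, ⨆ j, B j j := Finset.sum_le_sum fun j _ => hle j
        _ = (n : ℝ) * ⨆ j, B j j := by simp [mul_comm]
    have hn' : (0 : ℝ) < n := by exact_mod_cast hn
    nlinarith
  -- the set for (ii)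
  set T := {r | ∃ S : Finset (Fin n), S.card = s₀ ∧
      r = lamMax (Matrix.of fun (i j : {x : Fin n // x ∈ S}) => |B i.1 j.1|)} with hT
  have hTbdd : BddAbove T := by
    refine Set.Finite.bddAbove (Set.Finite.subset (Set.finite_range
      (fun S : Finset (Fin n) =>
        lamMax (Matrix.of fun (i j : {x : Fin n // x ∈ S}) => |B i.1 j.1|))) ?_)
    rintro r ⟨S, -, rfl⟩
    exact ⟨S, rfl⟩
  have hTne : T.Nonempty := by
    obtain ⟨S, -, hScard⟩ := Finset.exists_subset_card_eq
      (show s₀ ≤ (univ : Finset (Fin n)).card by simpa using hs₀n)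
    exact ⟨_, S, hScard, rfl⟩
  have conj3 : rhoMax s₀ B = sSup T := by
    rw [hrho]
    apply le_antisymm
    · refine csSup_le hRne ?_
      rintro r ⟨q, hq, ⟨S₀, hS₀c, hS₀z⟩, rfl⟩
      obtain ⟨S, hsub, -, hScard⟩ := Finset.exists_subsuperset_card_eq
        (Finset.subset_univ S₀) hS₀c (by simpa using hs₀n)
      have hz : ∀ i ∉ S, q i = 0 := fun i hi => hS₀z i (fun h => hi (hsub h))
      set M := Matrix.of fun (i j : {x : Fin n // x ∈ S}) => |B i.1 j.1| with hM
      set q' : {x : Fin n // x ∈ S} → ℝ := fun i => |q i.1| with hq'def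
      have he2 : e2 q' = 1 := by
        rw [← hq]
        refine e2_eq_of_sum_sq_eq ?_
        calc ∑ i : {x // x ∈ S}, q' i ^ 2 = ∑ i ∈ S, |q i| ^ 2 :=
              Finset.sum_coe_sort S (fun i => |q i| ^ 2)
          _ = ∑ i ∈ S, q i ^ 2 := Finset.sum_congr rfl fun i _ => sq_abs _
          _ = ∑ i, q i ^ 2 := Finset.sum_subset (Finset.subset_univ S)
              (fun i _ hi => by rw [hz i hi]; ring)
      have hval : (∑ i, ∑ j, |B i j| * |q i| * |q j|) = q' ⬝ᵥ M.mulVec q' := by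
        rw [double_sum_restrict S (fun i j => |B i j|) q hz]
        simp only [dotProduct, Matrix.mulVec, Finset.mul_sum]
        refine Finset.sum_congr rfl fun i _ => Finset.sum_congr rfl fun j _ => ?_
        simp only [hM, hq'def, Matrix.of_apply]
        ring
      have hmem : (∑ i, ∑ j, |B i j| * |q i| * |q j|) ∈
          {r | ∃ v : {x : Fin n // x ∈ S} → ℝ, e2 v = 1 ∧ r = v ⬝ᵥ M.mulVec v} :=
        ⟨q', he2, hval⟩
      have h1 : (∑ i, ∑ j, |B i j| * |q i| * |q j|) ≤ lamMax M :=
        le_csSup (lamSet_bddAbove M) hmem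
      exact h1.trans (le_csSup hTbdd ⟨S, hScard, rfl⟩)
    · refine csSup_le hTne ?_
      rintro r ⟨S, hScard, rfl⟩
      set M := Matrix.of fun (i j : {x : Fin n // x ∈ S}) => |B i.1 j.1| with hM
      have hSne : S.Nonempty := Finset.card_pos.mp (by omega)
      obtain ⟨a, ha⟩ := hSne
      have hq₀ : e2 (fun i : {x : Fin n // x ∈ S} => if i = ⟨a, ha⟩ then (1:ℝ) else 0) = 1 := by
        unfold e2
        rw [show ∑ i : {x : Fin n // x ∈ S}, (if i = ⟨a, ha⟩ then (1:ℝ) else 0) ^ 2 = 1 by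
          simp [apply_ite (fun x : ℝ => x ^ 2)]]
        exact Real.sqrt_one
      refine csSup_le ⟨_, _, hq₀, rfl⟩ ?_
      rintro r ⟨q', hq', rfl⟩
      set q : Fin n → ℝ := fun i => if h : i ∈ S then |q' ⟨i, h⟩| else 0 with hqdef
      have hz : ∀ i ∉ S, q i = 0 := fun i hi => dif_neg hi
      have hqi : ∀ (i : {x : Fin n // x ∈ S}), q i.1 = |q' i| := by
        rintro ⟨i, h⟩; exact dif_pos h
      have he2q : e2 q = 1 := by
        rw [← hq']
        refine e2_eq_of_sum_sq_eq ?_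
        calc ∑ i, q i ^ 2 = ∑ i ∈ S, q i ^ 2 :=
              (Finset.sum_subset (Finset.subset_univ S)
                (fun i _ hi => by rw [hz i hi]; ring)).symm
          _ = ∑ i : {x // x ∈ S}, q i.1 ^ 2 := (Finset.sum_coe_sort S (fun i => q i ^ 2)).symm
          _ = ∑ i : {x // x ∈ S}, q' i ^ 2 :=
              Finset.sum_congr rfl fun i _ => by rw [hqi i, sq_abs]
      have hval : (∑ i, ∑ j, |B i j| * |q i| * |q j|)
          = ∑ i : {x // x ∈ S}, ∑ j : {x // x ∈ S}, |B i.1 j.1| * |q' i| * |q' j| := by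
        rw [double_sum_restrict S (fun i j => |B i j|) q hz]
        refine Finset.sum_congr rfl fun i _ => Finset.sum_congr rfl fun j _ => ?_
        rw [hqi i, hqi j, abs_abs, abs_abs]
      have hle : q' ⬝ᵥ M.mulVec q' ≤ ∑ i, ∑ j, |B i j| * |q i| * |q j| := by
        rw [hval]
        calc q' ⬝ᵥ M.mulVec q' = ∑ i : {x // x ∈ S}, ∑ j : {x // x ∈ S}, q' i * (M i j * q' j) := by
              simp [dotProduct, Matrix.mulVec, Finset.mul_sum]
          _ ≤ ∑ i : {x // x ∈ S}, ∑ j : {x // x ∈ S}, |B i.1 j.1| * |q' i| * |q' j| := by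
              refine Finset.sum_le_sum fun i _ => Finset.sum_le_sum fun j _ => ?_
              calc q' i * (M i j * q' j) ≤ |q' i * (M i j * q' j)| := le_abs_self _
                _ = |B i.1 j.1| * |q' i| * |q' j| := by
                    simp only [hM, Matrix.of_apply, abs_mul, abs_abs]; ring
      exact hle.trans (le_csSup hRbdd ⟨q, he2q, ⟨S, le_of_eq hScard, hz⟩, rfl⟩)
  -- (iii)
  have conj4 : rhoMax s₀ B ≤ Real.sqrt s₀ * opNorm B := by
    rw [hrho]
    refine csSup_le hRne ?_
    rintro r ⟨q, hq, ⟨S, hSc, hz⟩, rfl⟩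
    have hrow : ∀ i, ∑ j, |B i j| * |q j| ≤ opNorm B := by
      intro i
      set w : Fin n → ℝ := fun j => if B i j < 0 then -|q j| else |q j| with hw
      have hww : e2 w = e2 q := by
        refine e2_eq_of_sum_sq_eq ?_
        refine Finset.sum_congr rfl fun j _ => ?_
        by_cases h : B i j < 0 <;> simp [hw, h, sq_abs]
      have hterm : ∀ j, B i j * w j = |B i j| * |q j| := by
        intro j
        by_cases h : B i j < 0
        · simp only [hw, if_pos h, abs_of_neg h]; ring
        · simp only [hw, if_neg h, abs_of_nonneg (not_lt.mp h)]
      calc ∑ j, |B i j| * |q j| = B.mulVec w i := by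
            simp [Matrix.mulVec, dotProduct, hterm]
        _ ≤ |B.mulVec w i| := le_abs_self _
        _ ≤ opNorm B := mulVec_apply_le_opNorm B (by rw [hww, hq]) i
    have hsumabs : ∑ i, |q i| ≤ Real.sqrt s₀ := by
      have h1 : ∑ i, |q i| = ∑ i ∈ S, |q i| :=
        (Finset.sum_subset (Finset.subset_univ S) (fun i _ hi => by rw [hz i hi]; simp)).symm
      have hsq : ∑ i ∈ S, |q i| ^ 2 ≤ 1 := by
        have h2 : ∑ i ∈ S, |q i| ^ 2 ≤ ∑ i, q i ^ 2 := by
          simp_rw [sq_abs]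
          exact Finset.sum_le_sum_of_subset_of_nonneg (Finset.subset_univ S)
            (fun i _ _ => sq_nonneg _)
        rwa [sum_sq_of_e2_eq_one hq] at h2
      have h2 : (∑ i ∈ S, |q i|) ^ 2 ≤ (s₀ : ℝ) := by
        calc (∑ i ∈ S, |q i|) ^ 2 ≤ (S.card : ℝ) * ∑ i ∈ S, |q i| ^ 2 :=
              sq_sum_le_card_mul_sum_sq
          _ ≤ (s₀ : ℝ) * 1 := by
              refine mul_le_mul ?_ hsq ?_ ?_
              · exact_mod_cast hSc
              · positivity
              · positivity
          _ = (s₀ : ℝ) := mul_one _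
      rw [h1]
      exact (Real.le_sqrt (Finset.sum_nonneg fun i _ => abs_nonneg _) (by positivity)).mpr h2
    calc ∑ i, ∑ j, |B i j| * |q i| * |q j|
        = ∑ i, |q i| * ∑ j, |B i j| * |q j| := by
          refine Finset.sum_congr rfl fun i _ => ?_
          rw [Finset.mul_sum]
          exact Finset.sum_congr rfl fun j _ => by ring
      _ ≤ ∑ i, |q i| * opNorm B := Finset.sum_le_sum fun i _ =>
          mul_le_mul_of_nonneg_left (hrow i) (abs_nonneg _)
      _ = (∑ i, |q i|) * opNorm B := (Finset.sum_mul _ _ _).symm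
      _ ≤ Real.sqrt s₀ * opNorm B := mul_le_mul_of_nonneg_right hsumabs (opNorm_nonneg' B)
  -- opNorm positive
  have hop : 0 < opNorm B := by
    set j₀ : Fin n := ⟨0, hn⟩
    have hd : 0 < B j₀ j₀ := posdef_diag_pos hB j₀
    set w : Fin n → ℝ := fun i => if i = j₀ then 1 else 0 with hwdef
    have hsingle : e2 w = 1 := by
      unfold e2
      have h0 : ∑ i, w i ^ 2 = 1 := by
        simp [hwdef, apply_ite (fun x : ℝ => x ^ 2)]
      rw [h0]
      exact Real.sqrt_one
    have h1 : |B.mulVec w j₀| ≤ opNorm B :=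
      mulVec_apply_le_opNorm B (le_of_eq hsingle) j₀
    have h2 : B.mulVec w j₀ = B j₀ j₀ := by
      simp [hwdef, Matrix.mulVec, dotProduct, mul_ite]
    rw [h2, abs_of_pos hd] at h1
    exact lt_of_lt_of_le hd h1
  exact ⟨conj1, conj2, conj3, conj4, (div_le_iff₀ hop).mpr (by rw [mul_comm] at conj4 ⊢; exact conj4)⟩
end
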